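/- Elementary convexity inequalities. For any real numbers X, Y ≥ 0 and any p > 1, setting p' := p/(p−1), one has: (i) Y (X^{p−1} − Y^{p−1}) ≤ (1/p')(X^p − Y^p) − (1/max(p,p')) (X^{p/2} − Y^{p/2})²; and (ii) Y |X^{p−1} − Y^{p−1}| ≤ |X^{p/2} − Y^{p/2}| (X^{p/2} + Y^{p/2}). -/
import Mathlib


/-- Elementary convexity inequalities: for `X, Y ≥ 0` and `p > 1`,
with `p' = p/(p-1)`,
(i) `Y (X^{p-1} - Y^{p-1}) ≤ (1/p')(X^p - Y^p) - (1/max(p,p')) (X^{p/2} - Y^{p/2})²`, and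
(ii) `Y |X^{p-1} - Y^{p-1}| ≤ |X^{p/2} - Y^{p/2}| (X^{p/2} + Y^{p/2})`. -/
theorem elementary_convexity_inequalities
    (X Y : ℝ) (hX : 0 ≤ X) (hY : 0 ≤ Y) (p : ℝ) (hp : 1 < p) :
    Y * (X ^ (p - 1) - Y ^ (p - 1)) ≤
        (1 / (p/(p-1))) * (X ^ p - Y ^ p)
          - (1 / max p (p/(p-1))) * (X ^ (p/2) - Y ^ (p/2)) ^ 2
      ∧ Y * |X ^ (p - 1) - Y ^ (p - 1)| ≤
        |X ^ (p/2) - Y ^ (p/2)| * (X ^ (p/2) + Y ^ (p/2)) := by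
  have hp0 : (0:ℝ) < p := by linarith
  have hp0' : p ≠ 0 := ne_of_gt hp0
  have hp1 : (0:ℝ) < p - 1 := by linarith
  set U := X ^ (p/2) with hUdef
  set V := Y ^ (p/2) with hVdef
  have hU0 : 0 ≤ U := Real.rpow_nonneg hX _
  have hV0 : 0 ≤ V := Real.rpow_nonneg hY _
  have hU2 : U ^ 2 = X ^ p := by
    rw [hUdef, ← Real.rpow_natCast (X ^ (p/2)) 2, ← Real.rpow_mul hX]
    norm_num
  have hV2 : V ^ 2 = Y ^ p := by
    rw [hVdef, ← Real.rpow_natCast (Y ^ (p/2)) 2, ← Real.rpow_mul hY]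
    norm_num
  have hXp : X ^ p = X * X ^ (p - 1) := by
    have h := Real.rpow_add' hX (show (1:ℝ) + (p-1) ≠ 0 from ne_of_gt (by linarith))
    rw [Real.rpow_one] at h
    conv_lhs => rw [show p = 1 + (p-1) by ring]
    rw [h]
  have hYp : Y ^ p = Y * Y ^ (p - 1) := by
    have h := Real.rpow_add' hY (show (1:ℝ) + (p-1) ≠ 0 from ne_of_gt (by linarith))
    rw [Real.rpow_one] at h
    conv_lhs => rw [show p = 1 + (p-1) by ring]
    rw [h]
  constructor
  · -- part (i)
    have h1d : 1/(p/(p-1)) = (p-1)/p := one_div_div _ _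
    rcases le_total 2 p with h2 | h2
    · -- case p ≥ 2, max = p
      have hmax : max p (p/(p-1)) = p :=
        max_eq_left (by rw [div_le_iff₀ hp1]; nlinarith)
      -- AM-GM: X^(p-1) * Y ≤ (1 - 2/p) * X^p + (2/p) * (U*V)
      have hw1 : (0:ℝ) ≤ 1 - 2/p := by
        rw [sub_nonneg, div_le_one hp0]; linarith
      have hw2 : (0:ℝ) ≤ 2/p := by positivity
      have hsum : (1 - 2/p) + 2/p = 1 := by ring
      have hamgm := Real.geom_mean_le_arith_mean2_weighted hw1 hw2
        (Real.rpow_nonneg hX p) (mul_nonneg hU0 hV0) hsum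
      have e1 : (X ^ p) ^ (1 - 2/p) = X ^ (p - 2) := by
        rw [← Real.rpow_mul hX]; congr 1; field_simp
      have e2 : (U * V) ^ (2/p) = X * Y := by
        rw [hUdef, hVdef,
          Real.mul_rpow (Real.rpow_nonneg hX _) (Real.rpow_nonneg hY _),
          ← Real.rpow_mul hX, ← Real.rpow_mul hY,
          show p/2 * (2/p) = 1 by field_simp, Real.rpow_one, Real.rpow_one]
      have e3 : X ^ (p - 2) * (X * Y) = X ^ (p - 1) * Y := by
        have h := Real.rpow_add' hX (show (p-2) + 1 ≠ 0 from ne_of_gt (by linarith))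
        rw [Real.rpow_one] at h
        rw [show p - 1 = (p-2) + 1 by ring, h]; ring
      rw [e1, e2, e3] at hamgm
      -- multiply by p
      have hkey : p * (X ^ (p-1) * Y) ≤ (p - 2) * X ^ p + 2 * (U * V) := by
        calc p * (X ^ (p-1) * Y) ≤ p * ((1 - 2/p) * X ^ p + 2/p * (U * V)) :=
              mul_le_mul_of_nonneg_left hamgm hp0.le
          _ = (p - 2) * X ^ p + 2 * (U * V) := by field_simp <;> ring
      rw [hmax, h1d,
        show (p-1)/p * (X ^ p - Y ^ p) - 1/p * (U - V)^2
          = ((p-1) * (X ^ p - Y ^ p) - (U - V)^2) / p by ring,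
        le_div_iff₀ hp0]
      nlinarith [hkey, hU2, hV2, hYp]
    · -- case p ≤ 2, max = p/(p-1)
      have hmax : max p (p/(p-1)) = p/(p-1) :=
        max_eq_right (by rw [le_div_iff₀ hp1]; nlinarith)
      have hw1 : (0:ℝ) ≤ 2/p - 1 := by
        rw [sub_nonneg, le_div_iff₀ hp0]; linarith
      have hw2 : (0:ℝ) ≤ 2 - 2/p := by
        rw [sub_nonneg, div_le_iff₀ hp0]; linarith
      have hsum : (2/p - 1) + (2 - 2/p) = 1 := by ring
      have hamgm := Real.geom_mean_le_arith_mean2_weighted hw1 hw2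
        (Real.rpow_nonneg hY p) (mul_nonneg hU0 hV0) hsum
      have e1 : (Y ^ p) ^ (2/p - 1) = Y ^ (2 - p) := by
        rw [← Real.rpow_mul hY]; congr 1; field_simp <;> ring
      have e2 : (U * V) ^ (2 - 2/p) = X ^ (p-1) * Y ^ (p-1) := by
        rw [hUdef, hVdef,
          Real.mul_rpow (Real.rpow_nonneg hX _) (Real.rpow_nonneg hY _),
          ← Real.rpow_mul hX, ← Real.rpow_mul hY,
          show p/2 * (2 - 2/p) = p - 1 by field_simp <;> ring]
      have e3 : Y ^ (2 - p) * (X ^ (p-1) * Y ^ (p-1)) = X ^ (p-1) * Y := by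
        have h := Real.rpow_add' hY (show (2-p) + (p-1) ≠ 0 from ne_of_gt (by linarith))
        rw [show (2-p) + (p-1) = 1 by ring, Real.rpow_one] at h
        calc Y ^ (2-p) * (X ^ (p-1) * Y ^ (p-1))
            = Y ^ (2-p) * Y ^ (p-1) * X ^ (p-1) := by ring
          _ = X ^ (p-1) * Y := by rw [← h]; ring
      rw [e1, e2, e3] at hamgm
      have hkey : p * (X ^ (p-1) * Y) ≤ (2 - p) * Y ^ p + (2*p - 2) * (U * V) := by
        calc p * (X ^ (p-1) * Y) ≤ p * ((2/p - 1) * Y ^ p + (2 - 2/p) * (U * V)) :=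
              mul_le_mul_of_nonneg_left hamgm hp0.le
          _ = (2 - p) * Y ^ p + (2*p - 2) * (U * V) := by field_simp <;> ring
      rw [hmax, h1d,
        show (p-1)/p * (X ^ p - Y ^ p) - (p-1)/p * (U - V)^2
          = ((p-1) * (X ^ p - Y ^ p) - (p-1) * (U - V)^2) / p by ring,
        le_div_iff₀ hp0]
      nlinarith [hkey, hU2, hV2, hYp]
  · -- part (ii)
    have hsumnn : 0 ≤ U + V := add_nonneg hU0 hV0
    have habs : |U - V| * (U + V) = |X ^ p - Y ^ p| := by
      rw [show X ^ p - Y ^ p = (U - V) * (U + V) by rw [← hU2, ← hV2]; ring,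
        abs_mul, abs_of_nonneg hsumnn]
    rw [habs]
    rcases le_total X Y with h | h
    · have h1 : X ^ (p-1) ≤ Y ^ (p-1) := Real.rpow_le_rpow hX h (by linarith)
      have h2 : X ^ p ≤ Y ^ p := Real.rpow_le_rpow hX h (by linarith)
      rw [abs_of_nonpos (by linarith), abs_of_nonpos (by linarith)]
      have h3 : X * X ^ (p-1) ≤ Y * X ^ (p-1) :=
        mul_le_mul_of_nonneg_right h (Real.rpow_nonneg hX _)
      linarith [hXp, hYp, h3]
    · have h1 : Y ^ (p-1) ≤ X ^ (p-1) := Real.rpow_le_rpow hY h (by linarith)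
      have h2 : Y ^ p ≤ X ^ p := Real.rpow_le_rpow hY h (by linarith)
      rw [abs_of_nonneg (by linarith), abs_of_nonneg (by linarith)]
      have h3 : Y * X ^ (p-1) ≤ X * X ^ (p-1) :=
        mul_le_mul_of_nonneg_right h (Real.rpow_nonneg hX _)
      linarith [hXp, hYp, h3]
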